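/- arXiv:1608.08872 — 2 statements merged into one kernel-verified Lean document; each statement's English description precedes it below -/
import Mathlib

section
/- Let y be a positive function in W^{1,1}_loc(ℝ₊) and x a function in L¹_loc(ℝ₊) that is almost everywhere nonnegative, satisfying y'(t) + x(t) ≤ C·y(t)·x(t) for almost every t ≥ 0, where C > 0. If y(0) = y₀ ≤ 1/(4C), then for all T ≥ 0 one has y(T) + (1/2)∫₀^T x(t) dt ≤ y₀; in particular y is bounded by y₀ on ℝ₊ and x is integrable on ℝ₊ with ∫₀^∞ x ≤ 2y₀. -/
/-!
While `y < 1/(2C)`, the inequality `y' + x ≤ C y x` gives `y' ≤ -x/2 ≤ 0`, so `y` decreases and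
`y(T) + ½ ∫₀ᵀ x ≤ y₀ ≤ 1/(4C)`: a continuity argument shows that `y` never reaches the threshold
`1/(2C)`. Since `y'` is only assumed to be an a.e. derivative with `y(T) = y₀ + ∫₀ᵀ y'`, its local
integrability has to be established along the way: below the threshold `y'` is nonpositive with
`∫₀ᵀ |y'| = y₀ - y(T) ≤ y₀`, and past the supremum `M` of the times up to which `y'` is integrable
the integral is the junk value `0`, so `y` is constant on `(M, ∞)`, forcing `y' = 0` there.
-/

open MeasureTheory Set Filter

theorem ContinuousOn.exists_le_and_forall_lt_before {f : ℝ → ℝ} {a b c u : ℝ}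
    (hf : ContinuousOn f (Icc a b)) (hu : u ∈ Icc a b) (hcu : c ≤ f u) :
    ∃ t ∈ Icc a b, c ≤ f t ∧ ∀ v ∈ Ico a t, f v < c := by
  have hK : IsCompact (Icc a b ∩ f ⁻¹' Ici c) :=
    isCompact_Icc.of_isClosed_subset (hf.preimage_isClosed_of_isClosed isClosed_Icc isClosed_Ici)
      inter_subset_left
  obtain ⟨t, ⟨htab, hct⟩, hleast⟩ := hK.exists_isLeast ⟨u, hu, hcu⟩
  refine ⟨t, htab, hct, fun v hv => lt_of_not_ge fun hcv => ?_⟩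
  exact (hleast ⟨⟨hv.1, hv.2.le.trans htab.2⟩, hcv⟩).not_gt hv.2

theorem ae_restrict_eq_zero_of_hasDerivAt_of_eqOn_const {μ : Measure ℝ} {f f' : ℝ → ℝ}
    {s : Set ℝ} {c : ℝ} (hs : IsOpen s) (hf : EqOn f (fun _ => c) s)
    (hf' : ∀ᵐ t ∂μ.restrict s, HasDerivAt f (f' t) t) : ∀ᵐ t ∂μ.restrict s, f' t = 0 := by
  filter_upwards [hf', ae_restrict_mem hs.measurableSet] with t hderiv hts
  exact hderiv.unique ((hasDerivAt_const t c).congr_of_eventuallyEq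
    (eventually_of_mem (hs.mem_nhds hts) hf))

theorem intervalIntegrable_of_forall_integral_norm_le {E : Type*} [NormedAddCommGroup E]
    {f : ℝ → E} {a b K : ℝ} (hab : a ≤ b)
    (hf : ∀ c ∈ Ico a b, IntervalIntegrable f volume a c)
    (hK : ∀ c ∈ Ico a b, ∫ t in a..c, ‖f t‖ ≤ K) : IntervalIntegrable f volume a b := by
  rcases hab.eq_or_lt with rfl | hab
  · exact IntervalIntegrable.refl
  obtain ⟨u, -, hu, hlim⟩ := exists_seq_strictMono_tendsto' hab
  have hu' : ∀ n, u n ∈ Ico a b := fun n => ⟨(hu n).1.le, (hu n).2⟩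
  rw [intervalIntegrable_iff_integrableOn_Ioc_of_le hab.le]
  refine integrableOn_Ioc_of_intervalIntegral_norm_bounded_right (I := K)
    (fun n => (hf _ (hu' n)).1) hlim (Eventually.of_forall fun n => ?_)
  rw [← intervalIntegral.integral_of_le (hu' n).1]
  exact hK _ (hu' n)

theorem integrableOn_Ici_and_integral_le_of_nonneg {f : ℝ → ℝ} {a K : ℝ}
    (hf : ∀ T, a ≤ T → IntervalIntegrable f volume a T)
    (hf_nonneg : 0 ≤ᵐ[volume.restrict (Ici a)] f) (hK : ∀ T, a ≤ T → ∫ t in a..T, f t ≤ K) :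
    IntegrableOn f (Ici a) ∧ ∫ t in Ici a, f t ≤ K := by
  have hle : ∀ n : ℕ, a ≤ a + n := fun n => le_add_of_nonneg_right n.cast_nonneg
  have hlim : Tendsto (fun n : ℕ => a + n) atTop atTop :=
    tendsto_atTop_add_const_left _ _ tendsto_natCast_atTop_atTop
  have hint : IntegrableOn f (Ioi a) := by
    refine integrableOn_Ioi_of_intervalIntegral_norm_bounded K a (fun n => (hf _ (hle n)).1) hlim
      (Eventually.of_forall fun n => ?_)
    rw [intervalIntegral.integral_congr_ae_restrict (g := f)]
    · exact hK _ (hle n)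
    rw [uIoc_of_le (hle n)]
    filter_upwards [ae_restrict_of_ae_restrict_of_subset
      (Ioc_subset_Ioi_self.trans Ioi_subset_Ici_self) hf_nonneg] with t ht
    exact Real.norm_of_nonneg ht
  refine ⟨Iff.mpr integrableOn_Ici_iff_integrableOn_Ioi hint, ?_⟩
  rw [integral_Ici_eq_integral_Ioi]
  exact le_of_tendsto (intervalIntegral_tendsto_integral_Ioi a hint hlim)
    (Eventually.of_forall fun n => hK _ (hle n))

theorem MeasureTheory.LocallyIntegrableOn.intervalIntegrable_of_le {E : Type*}
    [NormedAddCommGroup E] {f : ℝ → E} {a b : ℝ} (hf : LocallyIntegrableOn f (Ici a)) (hab : a ≤ b) :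
    IntervalIntegrable f volume a b :=
  (intervalIntegrable_iff_integrableOn_Icc_of_le hab).2
    (hf.integrableOn_compact_subset Icc_subset_Ici_self isCompact_Icc)

section Absorption

variable {y y' g : ℝ → ℝ} {c : ℝ}

theorem continuousOn_Icc_of_eq_add_integral
    (hFTC : ∀ T, 0 ≤ T → y T = y 0 + ∫ t in (0:ℝ)..T, y' t) {s : ℝ} (hs : 0 ≤ s)
    (hint : IntervalIntegrable y' volume 0 s) : ContinuousOn y (Icc 0 s) := by
  have hprim := intervalIntegral.continuousOn_primitive_interval' hint left_mem_uIcc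
  rw [uIcc_of_le hs] at hprim
  exact (continuousOn_const.add hprim).congr fun v hv => hFTC v hv.1

theorem add_integral_le_of_forall_lt
    (hFTC : ∀ T, 0 ≤ T → y T = y 0 + ∫ t in (0:ℝ)..T, y' t)
    (hdecay : ∀ᵐ t ∂volume.restrict (Ici 0), y t < c → y' t ≤ -g t) {s : ℝ} (hs : 0 ≤ s)
    (hint : IntervalIntegrable y' volume 0 s) (hg : IntervalIntegrable g volume 0 s)
    (hsmall : ∀ v ∈ Ico 0 s, y v < c) : y s + ∫ t in (0:ℝ)..s, g t ≤ y 0 := by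
  have hle : ∀ᵐ t ∂volume.restrict (Icc 0 s), y' t ≤ -g t := by
    rw [ae_restrict_congr_set Ico_ae_eq_Icc.symm]
    filter_upwards [ae_restrict_of_ae_restrict_of_subset Ico_subset_Ici_self hdecay,
      ae_restrict_mem measurableSet_Ico] with t ht hts
    exact ht (hsmall t hts)
  have hmono := intervalIntegral.integral_mono_ae_restrict hs hint hg.neg hle
  simp only [Pi.neg_apply, intervalIntegral.integral_neg] at hmono
  linarith [hFTC s hs]

theorem forall_lt_of_intervalIntegrable
    (hFTC : ∀ T, 0 ≤ T → y T = y 0 + ∫ t in (0:ℝ)..T, y' t)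
    (hg : ∀ T, 0 ≤ T → IntervalIntegrable g volume 0 T)
    (hg_nonneg : 0 ≤ᵐ[volume.restrict (Ici 0)] g)
    (hdecay : ∀ᵐ t ∂volume.restrict (Ici 0), y t < c → y' t ≤ -g t) (hy0 : y 0 < c)
    {s : ℝ} (hs : 0 ≤ s) (hint : IntervalIntegrable y' volume 0 s) :
    ∀ t ∈ Icc 0 s, y t < c := by
  by_contra! ⟨u, hu, hcu⟩
  obtain ⟨t, ht, hct, hbefore⟩ :=
    (continuousOn_Icc_of_eq_add_integral hFTC hs hint).exists_le_and_forall_lt_before hu hcu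
  have hint_t : IntervalIntegrable y' volume 0 t :=
    hint.mono_set (uIcc_subset_uIcc left_mem_uIcc (mem_uIcc_of_le ht.1 ht.2))
  have hdecrease := add_integral_le_of_forall_lt hFTC hdecay ht.1 hint_t (hg t ht.1) hbefore
  have hg_int_nonneg : 0 ≤ ∫ τ in (0:ℝ)..t, g τ := intervalIntegral.integral_nonneg_of_ae_restrict
    ht.1 (ae_restrict_of_ae_restrict_of_subset Icc_subset_Ici_self hg_nonneg)
  linarith

theorem intervalIntegrable_of_forall_Ico
    (hFTC : ∀ T, 0 ≤ T → y T = y 0 + ∫ t in (0:ℝ)..T, y' t)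
    (hg : ∀ T, 0 ≤ T → IntervalIntegrable g volume 0 T)
    (hg_nonneg : 0 ≤ᵐ[volume.restrict (Ici 0)] g)
    (hdecay : ∀ᵐ t ∂volume.restrict (Ici 0), y t < c → y' t ≤ -g t) (hy0 : y 0 < c)
    (hy_nonneg : ∀ t, 0 ≤ t → 0 ≤ y t) {M : ℝ} (hM : 0 ≤ M)
    (hint : ∀ s ∈ Ico 0 M, IntervalIntegrable y' volume 0 s) :
    IntervalIntegrable y' volume 0 M := by
  refine intervalIntegrable_of_forall_integral_norm_le (K := y 0) hM hint fun s hs => ?_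
  have hsmall := forall_lt_of_intervalIntegrable hFTC hg hg_nonneg hdecay hy0 hs.1 (hint s hs)
  have hnonpos : ∀ᵐ t ∂volume.restrict (uIoc 0 s), y' t ≤ 0 := by
    rw [uIoc_of_le hs.1]
    have hsub : Ioc 0 s ⊆ Ici 0 := Ioc_subset_Ioi_self.trans Ioi_subset_Ici_self
    filter_upwards [ae_restrict_of_ae_restrict_of_subset hsub hdecay,
      ae_restrict_of_ae_restrict_of_subset hsub hg_nonneg,
      ae_restrict_mem measurableSet_Ioc] with t hdt hgt hts
    exact (hdt (hsmall t (Ioc_subset_Icc_self hts))).trans (neg_nonpos.2 hgt)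
  calc ∫ t in (0:ℝ)..s, ‖y' t‖ = ∫ t in (0:ℝ)..s, -y' t :=
        intervalIntegral.integral_congr_ae_restrict
          (hnonpos.mono fun t ht => Real.norm_of_nonpos ht)
    _ = y 0 - y s := by rw [intervalIntegral.integral_neg]; linarith [hFTC s hs.1]
    _ ≤ y 0 := by linarith [hy_nonneg s hs.1]

theorem intervalIntegrable_of_eq_add_integral
    (hFTC : ∀ T, 0 ≤ T → y T = y 0 + ∫ t in (0:ℝ)..T, y' t)
    (hy' : ∀ᵐ t ∂volume.restrict (Ici 0), HasDerivAt y (y' t) t)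
    (hg : ∀ T, 0 ≤ T → IntervalIntegrable g volume 0 T)
    (hg_nonneg : 0 ≤ᵐ[volume.restrict (Ici 0)] g)
    (hdecay : ∀ᵐ t ∂volume.restrict (Ici 0), y t < c → y' t ≤ -g t) (hy0 : y 0 < c)
    (hy_nonneg : ∀ t, 0 ≤ t → 0 ≤ y t) {T : ℝ} (hT : 0 ≤ T) :
    IntervalIntegrable y' volume 0 T := by
  by_contra hbad
  set A := {s | 0 ≤ s ∧ IntervalIntegrable y' volume 0 s}
  have hdown : ∀ s ∈ A, ∀ u ∈ Icc 0 s, IntervalIntegrable y' volume 0 u := fun s hs u hu =>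
    hs.2.mono_set (uIcc_subset_uIcc left_mem_uIcc (mem_uIcc_of_le hu.1 hu.2))
  have hA : BddAbove A := ⟨T, fun s hs => le_of_not_gt fun hTs => hbad (hdown s hs T ⟨hT, hTs.le⟩)⟩
  have h0 : (0:ℝ) ∈ A := ⟨le_rfl, IntervalIntegrable.refl⟩
  set M := sSup A
  have hM : 0 ≤ M := le_csSup hA h0
  have hM_int : IntervalIntegrable y' volume 0 M :=
    intervalIntegrable_of_forall_Ico hFTC hg hg_nonneg hdecay hy0 hy_nonneg hM fun s hs =>
      let ⟨a, ha, hsa⟩ := exists_lt_of_lt_csSup ⟨0, h0⟩ hs.2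
      hdown a ha s ⟨hs.1, hsa.le⟩
  -- past `M` the integral in `hFTC` takes the junk value `0`
  have hconst : EqOn y (fun _ => y 0) (Ioi M) := fun t ht => by
    have hnot : ¬ IntervalIntegrable y' volume 0 t := fun h =>
      (le_csSup hA ⟨hM.trans ht.le, h⟩).not_gt ht
    simp [hFTC t (hM.trans ht.le), intervalIntegral.integral_undef hnot]
  have hzero := ae_restrict_eq_zero_of_hasDerivAt_of_eqOn_const isOpen_Ioi hconst
    (ae_restrict_of_ae_restrict_of_subset (Ioi_subset_Ici hM) hy')
  have hM_succ : IntervalIntegrable y' volume M (M + 1) :=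
    (intervalIntegrable_iff_integrableOn_Ioc_of_le (by linarith)).2 <|
      integrableOn_zero.congr_fun_ae
        ((ae_restrict_of_ae_restrict_of_subset Ioc_subset_Ioi_self hzero).mono fun t ht => ht.symm)
  exact (le_csSup hA ⟨by linarith, hM_int.trans hM_succ⟩).not_gt (by linarith)

theorem add_integral_le_of_hasDerivAt
    (hFTC : ∀ T, 0 ≤ T → y T = y 0 + ∫ t in (0:ℝ)..T, y' t)
    (hy' : ∀ᵐ t ∂volume.restrict (Ici 0), HasDerivAt y (y' t) t)
    (hg : ∀ T, 0 ≤ T → IntervalIntegrable g volume 0 T)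
    (hg_nonneg : 0 ≤ᵐ[volume.restrict (Ici 0)] g)
    (hdecay : ∀ᵐ t ∂volume.restrict (Ici 0), y t < c → y' t ≤ -g t) (hy0 : y 0 < c)
    (hy_nonneg : ∀ t, 0 ≤ t → 0 ≤ y t) {T : ℝ} (hT : 0 ≤ T) :
    y T + ∫ t in (0:ℝ)..T, g t ≤ y 0 := by
  have hint := intervalIntegrable_of_eq_add_integral hFTC hy' hg hg_nonneg hdecay hy0 hy_nonneg hT
  exact add_integral_le_of_forall_lt hFTC hdecay hT hint (hg T hT) fun v hv =>
    forall_lt_of_intervalIntegrable hFTC hg hg_nonneg hdecay hy0 hT hint v (Ico_subset_Icc_self hv)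

end Absorption

/-- Gronwall-type absorption lemma (Lemma A.1 of de Anna–Zarnescu). -/
theorem stmt_0 (C : ℝ) (hC : 0 < C) (y x y' : ℝ → ℝ)
    (hy_pos : ∀ t, 0 ≤ t → 0 < y t)
    (hx_loc : LocallyIntegrableOn x (Set.Ici 0))
    (hx_nonneg : ∀ᵐ t ∂(volume.restrict (Set.Ici (0:ℝ))), 0 ≤ x t)
    (hy_deriv : ∀ᵐ t ∂(volume.restrict (Set.Ici (0:ℝ))), HasDerivAt y (y' t) t)
    (hy_FTC : ∀ T, 0 ≤ T → y T = y 0 + ∫ t in (0:ℝ)..T, y' t)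
    (hineq : ∀ᵐ t ∂(volume.restrict (Set.Ici (0:ℝ))), y' t + x t ≤ C * y t * x t)
    (hy0 : y 0 ≤ 1 / (4 * C)) :
    (∀ T, 0 ≤ T → y T + (1/2) * ∫ t in (0:ℝ)..T, x t ≤ y 0) ∧
    (∀ t, 0 ≤ t → y t ≤ y 0) ∧
    IntegrableOn x (Set.Ici 0) ∧
    ∫ t in Set.Ici (0:ℝ), x t ≤ 2 * y 0 := by
  have hx_int : ∀ T, 0 ≤ T → IntervalIntegrable x volume 0 T := fun T hT =>
    hx_loc.intervalIntegrable_of_le hT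
  have hy0_lt : y 0 < 1 / (2 * C) :=
    hy0.trans_lt (one_div_lt_one_div_of_lt (by linarith) (by linarith))
  have hdecay : ∀ᵐ t ∂volume.restrict (Ici 0), y t < 1 / (2 * C) → y' t ≤ -(1 / 2 * x t) := by
    filter_upwards [hx_nonneg, hineq] with t hxt ht hyt
    have hCy : C * y t ≤ 1 / 2 := by
      rw [lt_div_iff₀ (by linarith)] at hyt
      linarith
    nlinarith
  have hmain : ∀ T, 0 ≤ T → y T + (1/2) * ∫ t in (0:ℝ)..T, x t ≤ y 0 := fun T hT => by
    simpa only [intervalIntegral.integral_const_mul] using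
      add_integral_le_of_hasDerivAt hy_FTC hy_deriv (fun T hT => (hx_int T hT).const_mul (1 / 2))
        (hx_nonneg.mono fun t ht => by positivity) hdecay hy0_lt (fun t ht => (hy_pos t ht).le) hT
  have hx_bound : ∀ T, 0 ≤ T → ∫ t in (0:ℝ)..T, x t ≤ 2 * y 0 := fun T hT => by
    linarith [hmain T hT, hy_pos T hT]
  obtain ⟨hx_integrable, hx_le⟩ :=
    integrableOn_Ici_and_integral_le_of_nonneg hx_int hx_nonneg hx_bound
  refine ⟨hmain, fun t ht => ?_, hx_integrable, hx_le⟩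
  linarith [hmain t ht, intervalIntegral.integral_nonneg_of_ae_restrict ht
    (ae_restrict_of_ae_restrict_of_subset Icc_subset_Ici_self hx_nonneg)]
end

section
/- Let d = 2 or 3 and T(x) = f(r)H̄(x) with r = |x|, where f : [0,∞) → ℝ is smooth with f(0) = f'(0) = 0. Then the vector field with components (T ↦ Σ_j ∂_j(Σ_{kl} ∂_i T_{kl} ∂_j T_{kl})) minus the gradient of (1/2)|∇T|² equals ((d-1)/d)·f'(r)·(f''(r) + (d-1)f'(r)/r - 2d f(r)/r²)·x/|x|, which is a radial gradient field: there exists h : [0,∞) → ℝ with h'(r) = ((d-1)/d) f'(r)(f''(r) + (d-1)f'(r)/r - 2d f(r)/r²) such that ∇·(∇T ⊗ ∇T) = ∇((1/2)|∇T|² + h(|x|)). -/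
set_option maxHeartbeats 1000000

noncomputable section

/-- Partial derivative `∂ᵢ u (x)`. -/
def pd (d : ℕ) (u : EuclideanSpace ℝ (Fin d) → ℝ)
    (x : EuclideanSpace ℝ (Fin d)) (i : Fin d) : ℝ :=
  fderiv ℝ u x (EuclideanSpace.single i 1)

/-- The component `T_{kl}(x) = f(|x|) H̄_{kl}(x)` of the melting-hedgehog ansatz. -/
def Tc (d : ℕ) (f : ℝ → ℝ) (k l : Fin d) (x : EuclideanSpace ℝ (Fin d)) : ℝ :=
  f ‖x‖ * (x k * x l / ‖x‖ ^ 2 - (if k = l then 1 else 0) / (d : ℝ))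

namespace Stmt19Aux

open scoped RealInnerProductSpace

variable {d : ℕ}

lemma hasFDerivAt_norm' {x : EuclideanSpace ℝ (Fin d)} (hx : x ≠ 0) :
    HasFDerivAt (fun y : EuclideanSpace ℝ (Fin d) => ‖y‖) (‖x‖⁻¹ • innerSL ℝ x) x := by
  have h2 : HasFDerivAt (fun y : EuclideanSpace ℝ (Fin d) => ‖y‖ ^ 2)
      (2 • (innerSL ℝ x)) x := (hasStrictFDerivAt_norm_sq x).hasFDerivAt
  have hn : ‖x‖ ≠ 0 := norm_ne_zero_iff.mpr hx
  have hq : (‖x‖ ^ 2 : ℝ) ≠ 0 := pow_ne_zero _ hn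
  have hs := (Real.hasDerivAt_sqrt hq).comp_hasFDerivAt x h2
  have heq : ((fun t => Real.sqrt t) ∘ fun y : EuclideanSpace ℝ (Fin d) => ‖y‖ ^ 2)
      = fun y => ‖y‖ := by
    funext y; simp [Function.comp, Real.sqrt_sq (norm_nonneg y)]
  rw [heq] at hs
  refine hs.congr_fderiv ?_
  rw [Real.sqrt_sq (norm_nonneg x)]
  ext v
  simp [two_smul]
  ring

lemma hasFDerivAt_coord (x : EuclideanSpace ℝ (Fin d)) (k : Fin d) :
    HasFDerivAt (fun y : EuclideanSpace ℝ (Fin d) => y k)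
      (EuclideanSpace.proj (𝕜 := ℝ) k) x :=
  (EuclideanSpace.proj (𝕜 := ℝ) k).hasFDerivAt

lemma norm_sq_sum (x : EuclideanSpace ℝ (Fin d)) : ∑ m, x m ^ 2 = ‖x‖ ^ 2 := by
  rw [EuclideanSpace.norm_eq, Real.sq_sqrt (by positivity)]
  exact Finset.sum_congr rfl fun m _ => by rw [Real.norm_eq_abs, sq_abs]

lemma sum_delta_mul (j : Fin d) (g : Fin d → ℝ) :
    ∑ k, (if k = j then (1:ℝ) else 0) * g k = g j := by
  simp [ite_mul, Finset.sum_ite_eq']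

lemma sum_delta_mul' (j : Fin d) (g : Fin d → ℝ) :
    ∑ k, (if j = k then (1:ℝ) else 0) * g k = g j := by
  simp [ite_mul, Finset.sum_ite_eq]

lemma pd_congr {u v : EuclideanSpace ℝ (Fin d) → ℝ} {x : EuclideanSpace ℝ (Fin d)}
    (h : u =ᶠ[nhds x] v) (i : Fin d) : pd d u x i = pd d v x i := by
  unfold pd; rw [h.fderiv_eq]

lemma pd_Tc {f : ℝ → ℝ} (hf : ContDiff ℝ (⊤ : ℕ∞) f) {x : EuclideanSpace ℝ (Fin d)} (hx : x ≠ 0)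
    (k l i : Fin d) :
    pd d (Tc d f k l) x i =
      deriv f ‖x‖ * (x i / ‖x‖) * (x k * x l / ‖x‖ ^ 2 - (if k = l then 1 else 0) / (d : ℝ))
      + f ‖x‖ * (((if k = i then 1 else 0) * x l + (if l = i then 1 else 0) * x k) / ‖x‖ ^ 2
          - 2 * x k * x l * x i / ‖x‖ ^ 4) := by
  have hn := hasFDerivAt_norm' hx
  have hnz : ‖x‖ ≠ 0 := norm_ne_zero_iff.mpr hx
  have hfd : HasDerivAt f (deriv f ‖x‖) ‖x‖ := ((hf.differentiable (by simp)) ‖x‖).hasDerivAt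
  have hA : HasFDerivAt (fun y : EuclideanSpace ℝ (Fin d) => f ‖y‖)
      (deriv f ‖x‖ • (‖x‖⁻¹ • innerSL ℝ x)) x := hfd.comp_hasFDerivAt x hn
  have hprod := (hasFDerivAt_coord x k).mul (hasFDerivAt_coord x l)
  have hns : HasFDerivAt (fun y : EuclideanSpace ℝ (Fin d) => ‖y‖ ^ 2)
      (2 • (innerSL ℝ x)) x := (hasStrictFDerivAt_norm_sq x).hasFDerivAt
  have hq : (‖x‖ ^ 2 : ℝ) ≠ 0 := pow_ne_zero _ hnz
  have hi : HasFDerivAt (fun y : EuclideanSpace ℝ (Fin d) => (‖y‖ ^ 2)⁻¹)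
      ((-(((‖x‖ ^ 2 :ℝ)) ^ 2)⁻¹) • (2 • (innerSL ℝ x))) x :=
    (hasDerivAt_inv hq).comp_hasFDerivAt x hns
  have hB := (hprod.mul hi).sub_const ((if k = l then (1:ℝ) else 0) / (d : ℝ))
  have hT := hA.mul hB
  have h1 : Tc d f k l = fun y : EuclideanSpace ℝ (Fin d) =>
      f ‖y‖ * (y k * y l * (‖y‖ ^ 2)⁻¹ - (if k = l then 1 else 0) / (d : ℝ)) := by
    funext y; rw [Tc, div_eq_mul_inv]
  unfold pd
  simp only [Pi.mul_def, Pi.add_def, Pi.sub_def] at hT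
  rw [h1, hT.fderiv]
  simp only [ContinuousLinearMap.add_apply, ContinuousLinearMap.smul_apply,
    ContinuousLinearMap.sub_apply, ContinuousLinearMap.comp_apply, smul_eq_mul,
    PiLp.proj_apply, EuclideanSpace.inner_single_right,
    innerSL_apply_apply, ContinuousLinearMap.coe_smul', Pi.smul_apply, conj_trivial,
    EuclideanSpace.single_apply]
  field_simp
  ring

lemma sum_GG (hd0 : (d:ℝ) ≠ 0) (x : EuclideanSpace ℝ (Fin d)) (r A B : ℝ) (hr : r ≠ 0)
    (hx2 : ∑ m, x m ^ 2 = r ^ 2) (i j : Fin d) :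
    ∑ k, ∑ l,
      (B * (x i / r) * (x k * x l / r ^ 2 - (if k = l then 1 else 0) / (d : ℝ))
        + A * (((if k = i then 1 else 0) * x l + (if l = i then 1 else 0) * x k) / r ^ 2
            - 2 * x k * x l * x i / r ^ 4))
      * (B * (x j / r) * (x k * x l / r ^ 2 - (if k = l then 1 else 0) / (d : ℝ))
        + A * (((if k = j then 1 else 0) * x l + (if l = j then 1 else 0) * x k) / r ^ 2
            - 2 * x k * x l * x j / r ^ 4))
    = ((d:ℝ) - 1) / d * B ^ 2 * (x i * x j) / r ^ 2
      + 2 * A ^ 2 * ((if i = j then 1 else 0) * r ^ 2 - x i * x j) / r ^ 4 := by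
  have key : ∀ k l : Fin d,
      (B * (x i / r) * (x k * x l / r ^ 2 - (if k = l then 1 else 0) / (d : ℝ))
        + A * (((if k = i then 1 else 0) * x l + (if l = i then 1 else 0) * x k) / r ^ 2
            - 2 * x k * x l * x i / r ^ 4))
      * (B * (x j / r) * (x k * x l / r ^ 2 - (if k = l then 1 else 0) / (d : ℝ))
        + A * (((if k = j then 1 else 0) * x l + (if l = j then 1 else 0) * x k) / r ^ 2
            - 2 * x k * x l * x j / r ^ 4))
    = ((B/r^3 - 2*A/r^4)^2 * x i * x j) * (x k ^ 2 * x l ^ 2)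
      + (2 * (B/r^3 - 2*A/r^4) * (-(B/(r*d))) * x i * x j) * ((if k = l then 1 else 0) * (x k * x l))
      + ((B/r^3 - 2*A/r^4) * (A/r^2) * x i) * ((if k = j then 1 else 0) * (x k * x l ^ 2))
      + ((B/r^3 - 2*A/r^4) * (A/r^2) * x i) * ((if l = j then 1 else 0) * (x k ^ 2 * x l))
      + ((B/r^3 - 2*A/r^4) * (A/r^2) * x j) * ((if k = i then 1 else 0) * (x k * x l ^ 2))
      + ((B/r^3 - 2*A/r^4) * (A/r^2) * x j) * ((if l = i then 1 else 0) * (x k ^ 2 * x l))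
      + ((-(B/(r*d)))^2 * x i * x j) * ((if k = l then 1 else 0) ^ 2)
      + ((-(B/(r*d))) * (A/r^2) * x i) * ((if k = l then 1 else 0) * ((if k = j then 1 else 0) * x l))
      + ((-(B/(r*d))) * (A/r^2) * x i) * ((if k = l then 1 else 0) * ((if l = j then 1 else 0) * x k))
      + ((-(B/(r*d))) * (A/r^2) * x j) * ((if k = l then 1 else 0) * ((if k = i then 1 else 0) * x l))
      + ((-(B/(r*d))) * (A/r^2) * x j) * ((if k = l then 1 else 0) * ((if l = i then 1 else 0) * x k))
      + ((A/r^2)^2) * ((if k = i then 1 else 0) * ((if k = j then 1 else 0) * x l ^ 2))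
      + ((A/r^2)^2) * ((if k = i then 1 else 0) * ((if l = j then 1 else 0) * (x k * x l)))
      + ((A/r^2)^2) * ((if l = i then 1 else 0) * ((if k = j then 1 else 0) * (x k * x l)))
      + ((A/r^2)^2) * ((if l = i then 1 else 0) * ((if l = j then 1 else 0) * x k ^ 2)) := by
    intro k l
    ring
  rw [Finset.sum_congr rfl (fun k _ => Finset.sum_congr rfl (fun l _ => key k l))]
  simp only [Finset.sum_add_distrib, ← Finset.mul_sum]
  simp only [sum_delta_mul, sum_delta_mul', ite_pow, one_pow, zero_pow, Finset.sum_ite_eq',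
    Finset.mem_univ, if_true, Finset.sum_const, Finset.card_univ, Fintype.card_fin,
    nsmul_eq_mul]
  have e1 : ∑ m : Fin d, x m * x m = r ^ 2 := by
    rw [Finset.sum_congr rfl (fun m _ => (sq (x m)).symm), hx2]
  have e2 : ∀ c : ℝ, (∑ m : Fin d, x m ^ 2 * c) = r ^ 2 * c := fun c => by
    rw [← Finset.sum_mul, hx2]
  have e3 : ∑ k : Fin d, ∑ l : Fin d, (if k = l then (1:ℝ) else 0 ^ 2) = (d : ℝ) := by
    simp [Finset.sum_ite_eq]
  simp only [hx2, e1, e2, e3]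
  field_simp
  by_cases hij : i = j <;> simp only [hij, if_true, if_false, reduceIte, one_mul, zero_mul, Finset.sum_const_zero, hx2] <;> ring

def Phi (d : ℕ) (f : ℝ → ℝ) (i j : Fin d) (y : EuclideanSpace ℝ (Fin d)) : ℝ :=
  ((d:ℝ)-1)/d * (deriv f ‖y‖ * deriv f ‖y‖) * (y i * y j) * (‖y‖^2)⁻¹
  + 2 * (f ‖y‖ * f ‖y‖) * ((if i = j then (1:ℝ) else 0) * ‖y‖^2 - y i * y j)
      * (‖y‖^2 * ‖y‖^2)⁻¹

def Wf (d : ℕ) (f : ℝ → ℝ) (y : EuclideanSpace ℝ (Fin d)) : ℝ :=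
  (1/2) * (((d:ℝ)-1)/d * (deriv f ‖y‖ * deriv f ‖y‖)
    + 2 * ((d:ℝ)-1) * (f ‖y‖ * f ‖y‖) * (‖y‖^2)⁻¹)

lemma pd_Phi (hd0 : (d:ℝ) ≠ 0) {f : ℝ → ℝ} (hf : ContDiff ℝ (⊤ : ℕ∞) f)
    {x : EuclideanSpace ℝ (Fin d)} (hx : x ≠ 0) (i j m : Fin d) :
    pd d (Phi d f i j) x m =
      ((d:ℝ)-1)/d * (2 * deriv f ‖x‖ * deriv (deriv f) ‖x‖) * (x m / ‖x‖) * (x i * x j) / ‖x‖^2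
      + ((d:ℝ)-1)/d * (deriv f ‖x‖)^2 *
          ((if i = m then (1:ℝ) else 0) * x j + (if j = m then (1:ℝ) else 0) * x i) / ‖x‖^2
      - ((d:ℝ)-1)/d * (deriv f ‖x‖)^2 * (x i * x j) * (2 * x m) / ‖x‖^4
      + 4 * f ‖x‖ * deriv f ‖x‖ * (x m / ‖x‖) *
          ((if i = j then (1:ℝ) else 0) * ‖x‖^2 - x i * x j) / ‖x‖^4
      + 2 * (f ‖x‖)^2 * (2 * (if i = j then (1:ℝ) else 0) * x m
          - (if i = m then (1:ℝ) else 0) * x j - (if j = m then (1:ℝ) else 0) * x i) / ‖x‖^4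
      - 8 * (f ‖x‖)^2 * ((if i = j then (1:ℝ) else 0) * ‖x‖^2 - x i * x j) * x m / ‖x‖^6 := by
  have hn := hasFDerivAt_norm' hx
  have hnz : ‖x‖ ≠ 0 := norm_ne_zero_iff.mpr hx
  have hq : (‖x‖ ^ 2 : ℝ) ≠ 0 := pow_ne_zero _ hnz
  have hfd : HasDerivAt f (deriv f ‖x‖) ‖x‖ := ((hf.differentiable (by simp)) ‖x‖).hasDerivAt
  have hfd2 : HasDerivAt (deriv f) (deriv (deriv f) ‖x‖) ‖x‖ :=
    (((contDiff_infty_iff_deriv.mp (hf.of_le (by simp))).2.differentiable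
      (by simp)) ‖x‖).hasDerivAt
  have hA : HasFDerivAt (fun y : EuclideanSpace ℝ (Fin d) => f ‖y‖)
      (deriv f ‖x‖ • (‖x‖⁻¹ • innerSL ℝ x)) x := hfd.comp_hasFDerivAt x hn
  have hB : HasFDerivAt (fun y : EuclideanSpace ℝ (Fin d) => deriv f ‖y‖)
      (deriv (deriv f) ‖x‖ • (‖x‖⁻¹ • innerSL ℝ x)) x := hfd2.comp_hasFDerivAt x hn
  have hns : HasFDerivAt (fun y : EuclideanSpace ℝ (Fin d) => ‖y‖ ^ 2)
      (2 • (innerSL ℝ x)) x := (hasStrictFDerivAt_norm_sq x).hasFDerivAt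
  have hi2 : HasFDerivAt (fun y : EuclideanSpace ℝ (Fin d) => (‖y‖ ^ 2)⁻¹)
      ((-(((‖x‖ ^ 2 :ℝ)) ^ 2)⁻¹) • (2 • (innerSL ℝ x))) x :=
    (hasDerivAt_inv hq).comp_hasFDerivAt x hns
  have hq4 : (‖x‖ ^ 2 * ‖x‖ ^ 2 : ℝ) ≠ 0 := mul_ne_zero hq hq
  have hns4 := hns.mul hns
  have hi4 : HasFDerivAt (fun y : EuclideanSpace ℝ (Fin d) => (‖y‖ ^ 2 * ‖y‖ ^ 2)⁻¹)
      ((-(((‖x‖ ^ 2 * ‖x‖ ^ 2 :ℝ)) ^ 2)⁻¹) •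
        (‖x‖ ^ 2 • (2 • (innerSL ℝ x)) + ‖x‖ ^ 2 • (2 • (innerSL ℝ x)))) x :=
    (hasDerivAt_inv hq4).comp_hasFDerivAt x hns4
  have h1 := ((hB.mul hB).const_mul (((d:ℝ)-1)/d)).mul
      ((hasFDerivAt_coord x i).mul (hasFDerivAt_coord x j))
  have h2 := h1.mul hi2
  have h3 := (hA.mul hA).const_mul (2:ℝ)
  have h4 := (hns.const_mul ((if i = j then (1:ℝ) else 0))).sub
      ((hasFDerivAt_coord x i).mul (hasFDerivAt_coord x j))
  have h5 := (h3.mul h4).mul hi4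
  have hT := h2.add h5
  unfold pd Phi
  simp only [Pi.mul_def, Pi.add_def, Pi.sub_def] at hT
  rw [hT.fderiv]
  simp only [ContinuousLinearMap.add_apply, ContinuousLinearMap.smul_apply,
    ContinuousLinearMap.sub_apply, ContinuousLinearMap.comp_apply, smul_eq_mul,
    PiLp.proj_apply, EuclideanSpace.inner_single_right,
    innerSL_apply_apply, ContinuousLinearMap.coe_smul', Pi.smul_apply, conj_trivial,
    EuclideanSpace.single_apply]
  by_cases hij : i = j
  · subst hij
    by_cases him : i = m
    · subst him
      simp only [eq_self_iff_true, if_true]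
      field_simp; ring
    · simp only [eq_self_iff_true, if_true, if_neg him]
      field_simp; ring
  · by_cases him : i = m
    · subst him
      have hji : ¬ j = i := fun h => hij h.symm
      simp only [eq_self_iff_true, if_true, if_neg hij, if_neg hji]
      field_simp; ring
    · by_cases hjm : j = m
      · subst hjm
        simp only [eq_self_iff_true, if_true, if_neg hij, if_neg him]
        field_simp; ring
      · simp only [if_neg hij, if_neg him, if_neg hjm]
        field_simp; ring

lemma pd_Wf (hd0 : (d:ℝ) ≠ 0) {f : ℝ → ℝ} (hf : ContDiff ℝ (⊤ : ℕ∞) f)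
    {x : EuclideanSpace ℝ (Fin d)} (hx : x ≠ 0) (m : Fin d) :
    pd d (Wf d f) x m =
      (((d:ℝ)-1)/d * deriv f ‖x‖ * deriv (deriv f) ‖x‖
        + 2 * ((d:ℝ)-1) * f ‖x‖ * deriv f ‖x‖ / ‖x‖^2
        - 2 * ((d:ℝ)-1) * (f ‖x‖)^2 / ‖x‖^3) * (x m / ‖x‖) := by
  have hn := hasFDerivAt_norm' hx
  have hnz : ‖x‖ ≠ 0 := norm_ne_zero_iff.mpr hx
  have hq : (‖x‖ ^ 2 : ℝ) ≠ 0 := pow_ne_zero _ hnz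
  have hfd : HasDerivAt f (deriv f ‖x‖) ‖x‖ := ((hf.differentiable (by simp)) ‖x‖).hasDerivAt
  have hfd2 : HasDerivAt (deriv f) (deriv (deriv f) ‖x‖) ‖x‖ :=
    (((contDiff_infty_iff_deriv.mp (hf.of_le (by simp))).2.differentiable
      (by simp)) ‖x‖).hasDerivAt
  have hA : HasFDerivAt (fun y : EuclideanSpace ℝ (Fin d) => f ‖y‖)
      (deriv f ‖x‖ • (‖x‖⁻¹ • innerSL ℝ x)) x := hfd.comp_hasFDerivAt x hn
  have hB : HasFDerivAt (fun y : EuclideanSpace ℝ (Fin d) => deriv f ‖y‖)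
      (deriv (deriv f) ‖x‖ • (‖x‖⁻¹ • innerSL ℝ x)) x := hfd2.comp_hasFDerivAt x hn
  have hns : HasFDerivAt (fun y : EuclideanSpace ℝ (Fin d) => ‖y‖ ^ 2)
      (2 • (innerSL ℝ x)) x := (hasStrictFDerivAt_norm_sq x).hasFDerivAt
  have hi2 : HasFDerivAt (fun y : EuclideanSpace ℝ (Fin d) => (‖y‖ ^ 2)⁻¹)
      ((-(((‖x‖ ^ 2 :ℝ)) ^ 2)⁻¹) • (2 • (innerSL ℝ x))) x :=
    (hasDerivAt_inv hq).comp_hasFDerivAt x hns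
  have hT := (((hB.mul hB).const_mul (((d:ℝ)-1)/d)).add
      (((hA.mul hA).const_mul (2 * ((d:ℝ)-1))).mul hi2)).const_mul (1/2 : ℝ)
  unfold pd Wf
  simp only [Pi.mul_def, Pi.add_def, Pi.sub_def] at hT
  rw [hT.fderiv]
  simp only [ContinuousLinearMap.add_apply, ContinuousLinearMap.smul_apply,
    ContinuousLinearMap.sub_apply, ContinuousLinearMap.comp_apply, smul_eq_mul,
    PiLp.proj_apply, EuclideanSpace.inner_single_right,
    innerSL_apply_apply, ContinuousLinearMap.coe_smul', Pi.smul_apply, conj_trivial,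
    EuclideanSpace.single_apply]
  field_simp
  ring

lemma pd_Wf_add (hd0 : (d:ℝ) ≠ 0) {f : ℝ → ℝ} (hf : ContDiff ℝ (⊤ : ℕ∞) f)
    {x : EuclideanSpace ℝ (Fin d)} (hx : x ≠ 0) {h : ℝ → ℝ} {gv : ℝ}
    (hh : HasDerivAt h gv ‖x‖) (m : Fin d) :
    pd d (fun y => Wf d f y + h ‖y‖) x m =
      (((d:ℝ)-1)/d * deriv f ‖x‖ * deriv (deriv f) ‖x‖
        + 2 * ((d:ℝ)-1) * f ‖x‖ * deriv f ‖x‖ / ‖x‖^2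
        - 2 * ((d:ℝ)-1) * (f ‖x‖)^2 / ‖x‖^3) * (x m / ‖x‖) + gv * (x m / ‖x‖) := by
  have hn := hasFDerivAt_norm' hx
  have hnz : ‖x‖ ≠ 0 := norm_ne_zero_iff.mpr hx
  have hq : (‖x‖ ^ 2 : ℝ) ≠ 0 := pow_ne_zero _ hnz
  have hfd : HasDerivAt f (deriv f ‖x‖) ‖x‖ := ((hf.differentiable (by simp)) ‖x‖).hasDerivAt
  have hfd2 : HasDerivAt (deriv f) (deriv (deriv f) ‖x‖) ‖x‖ :=
    (((contDiff_infty_iff_deriv.mp (hf.of_le (by simp))).2.differentiable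
      (by simp)) ‖x‖).hasDerivAt
  have hA : HasFDerivAt (fun y : EuclideanSpace ℝ (Fin d) => f ‖y‖)
      (deriv f ‖x‖ • (‖x‖⁻¹ • innerSL ℝ x)) x := hfd.comp_hasFDerivAt x hn
  have hB : HasFDerivAt (fun y : EuclideanSpace ℝ (Fin d) => deriv f ‖y‖)
      (deriv (deriv f) ‖x‖ • (‖x‖⁻¹ • innerSL ℝ x)) x := hfd2.comp_hasFDerivAt x hn
  have hns : HasFDerivAt (fun y : EuclideanSpace ℝ (Fin d) => ‖y‖ ^ 2)
      (2 • (innerSL ℝ x)) x := (hasStrictFDerivAt_norm_sq x).hasFDerivAt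
  have hi2 : HasFDerivAt (fun y : EuclideanSpace ℝ (Fin d) => (‖y‖ ^ 2)⁻¹)
      ((-(((‖x‖ ^ 2 :ℝ)) ^ 2)⁻¹) • (2 • (innerSL ℝ x))) x :=
    (hasDerivAt_inv hq).comp_hasFDerivAt x hns
  have hW := (((hB.mul hB).const_mul (((d:ℝ)-1)/d)).add
      (((hA.mul hA).const_mul (2 * ((d:ℝ)-1))).mul hi2)).const_mul (1/2 : ℝ)
  have hhF : HasFDerivAt (fun y : EuclideanSpace ℝ (Fin d) => h ‖y‖)
      (gv • (‖x‖⁻¹ • innerSL ℝ x)) x := hh.comp_hasFDerivAt x hn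
  have hT := hW.add hhF
  unfold pd
  simp only [Wf]
  simp only [Pi.mul_def, Pi.add_def, Pi.sub_def] at hT
  rw [hT.fderiv]
  simp only [ContinuousLinearMap.add_apply, ContinuousLinearMap.smul_apply,
    ContinuousLinearMap.sub_apply, ContinuousLinearMap.comp_apply, smul_eq_mul,
    PiLp.proj_apply, EuclideanSpace.inner_single_right,
    innerSL_apply_apply, ContinuousLinearMap.coe_smul', Pi.smul_apply, conj_trivial,
    EuclideanSpace.single_apply]
  field_simp
  ring

lemma sum_pd_eq_Phi (hd0 : (d:ℝ) ≠ 0) {f : ℝ → ℝ} (hf : ContDiff ℝ (⊤ : ℕ∞) f)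
    {y : EuclideanSpace ℝ (Fin d)} (hy : y ≠ 0) (i j : Fin d) :
    ∑ k, ∑ l, pd d (Tc d f k l) y i * pd d (Tc d f k l) y j = Phi d f i j y := by
  have hx2 := norm_sq_sum y
  have hr : ‖y‖ ≠ 0 := norm_ne_zero_iff.mpr hy
  calc ∑ k, ∑ l, pd d (Tc d f k l) y i * pd d (Tc d f k l) y j
      = ∑ k, ∑ l,
      (deriv f ‖y‖ * (y i / ‖y‖) * (y k * y l / ‖y‖ ^ 2 - (if k = l then 1 else 0) / (d : ℝ))
        + f ‖y‖ * (((if k = i then 1 else 0) * y l + (if l = i then 1 else 0) * y k) / ‖y‖ ^ 2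
            - 2 * y k * y l * y i / ‖y‖ ^ 4))
      * (deriv f ‖y‖ * (y j / ‖y‖) * (y k * y l / ‖y‖ ^ 2 - (if k = l then 1 else 0) / (d : ℝ))
        + f ‖y‖ * (((if k = j then 1 else 0) * y l + (if l = j then 1 else 0) * y k) / ‖y‖ ^ 2
            - 2 * y k * y l * y j / ‖y‖ ^ 4)) := by
        refine Finset.sum_congr rfl fun k _ => Finset.sum_congr rfl fun l _ => ?_
        rw [pd_Tc hf hy k l i, pd_Tc hf hy k l j]
    _ = ((d:ℝ) - 1) / d * (deriv f ‖y‖) ^ 2 * (y i * y j) / ‖y‖ ^ 2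
        + 2 * (f ‖y‖) ^ 2 * ((if i = j then 1 else 0) * ‖y‖ ^ 2 - y i * y j) / ‖y‖ ^ 4 :=
        sum_GG hd0 y ‖y‖ (f ‖y‖) (deriv f ‖y‖) hr hx2 i j
    _ = Phi d f i j y := by
        simp only [Phi]
        field_simp

lemma div_Phi (hd0 : (d:ℝ) ≠ 0) {f : ℝ → ℝ} (hf : ContDiff ℝ (⊤ : ℕ∞) f)
    {x : EuclideanSpace ℝ (Fin d)} (hx : x ≠ 0) (i : Fin d) :
    ∑ j, pd d (Phi d f i j) x j =
      (2 * (((d:ℝ)-1)/d) * deriv f ‖x‖ * deriv (deriv f) ‖x‖ / ‖x‖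
        + ((d:ℝ)-1) * (((d:ℝ)-1)/d) * (deriv f ‖x‖)^2 / ‖x‖^2
        - 2 * ((d:ℝ)-1) * (f ‖x‖)^2 / ‖x‖^4) * x i := by
  have hx2 := norm_sq_sum x
  have hnz : ‖x‖ ≠ 0 := norm_ne_zero_iff.mpr hx
  rw [Finset.sum_congr rfl (fun j _ => pd_Phi hd0 hf hx i j j)]
  have key : ∀ j : Fin d,
      ((d:ℝ)-1)/d * (2 * deriv f ‖x‖ * deriv (deriv f) ‖x‖) * (x j / ‖x‖) * (x i * x j) / ‖x‖^2
      + ((d:ℝ)-1)/d * (deriv f ‖x‖)^2 *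
          ((if i = j then (1:ℝ) else 0) * x j + (if j = j then (1:ℝ) else 0) * x i) / ‖x‖^2
      - ((d:ℝ)-1)/d * (deriv f ‖x‖)^2 * (x i * x j) * (2 * x j) / ‖x‖^4
      + 4 * f ‖x‖ * deriv f ‖x‖ * (x j / ‖x‖) *
          ((if i = j then (1:ℝ) else 0) * ‖x‖^2 - x i * x j) / ‖x‖^4
      + 2 * (f ‖x‖)^2 * (2 * (if i = j then (1:ℝ) else 0) * x j
          - (if i = j then (1:ℝ) else 0) * x j - (if j = j then (1:ℝ) else 0) * x i) / ‖x‖^4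
      - 8 * (f ‖x‖)^2 * ((if i = j then (1:ℝ) else 0) * ‖x‖^2 - x i * x j) * x j / ‖x‖^6
      = (2 * (((d:ℝ)-1)/d) * deriv f ‖x‖ * deriv (deriv f) ‖x‖ * x i / ‖x‖^3
          - 2 * (((d:ℝ)-1)/d) * (deriv f ‖x‖)^2 * x i / ‖x‖^4
          - 4 * f ‖x‖ * deriv f ‖x‖ * x i / ‖x‖^5
          + 8 * (f ‖x‖)^2 * x i / ‖x‖^6) * x j ^ 2
        + ((((d:ℝ)-1)/d) * (deriv f ‖x‖)^2 / ‖x‖^2 + 4 * f ‖x‖ * deriv f ‖x‖ / ‖x‖^3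
            - 6 * (f ‖x‖)^2 / ‖x‖^4) * ((if i = j then (1:ℝ) else 0) * x j)
        + ((((d:ℝ)-1)/d) * (deriv f ‖x‖)^2 * x i / ‖x‖^2 - 2 * (f ‖x‖)^2 * x i / ‖x‖^4) := by
    intro j
    simp only [eq_self_iff_true, if_true]
    by_cases hij : i = j
    · subst hij
      simp only [eq_self_iff_true, if_true]
      field_simp
      ring
    · simp only [if_neg hij]
      field_simp
      ring
  rw [Finset.sum_congr rfl (fun j _ => key j)]
  simp only [Finset.sum_add_distrib, ← Finset.mul_sum, Finset.sum_const, Finset.card_univ,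
    Fintype.card_fin, nsmul_eq_mul]
  rw [hx2, sum_delta_mul' i (fun j => x j)]
  field_simp
  ring

lemma trace_eq (hd0 : (d:ℝ) ≠ 0) {f : ℝ → ℝ} (hf : ContDiff ℝ (⊤ : ℕ∞) f)
    {x : EuclideanSpace ℝ (Fin d)} (hx : x ≠ 0) :
    (1/2 : ℝ) * ∑ j, ∑ k, ∑ l, (pd d (Tc d f k l) x j) ^ 2 = Wf d f x := by
  have hx2 := norm_sq_sum x
  have hnz : ‖x‖ ≠ 0 := norm_ne_zero_iff.mpr hx
  have inner : ∀ j : Fin d, ∑ k, ∑ l, (pd d (Tc d f k l) x j) ^ 2 = Phi d f j j x := by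
    intro j
    rw [Finset.sum_congr rfl (fun k _ => Finset.sum_congr rfl
      (fun l _ => sq (pd d (Tc d f k l) x j)))]
    exact sum_pd_eq_Phi hd0 hf hx j j
  rw [Finset.sum_congr rfl (fun j _ => inner j)]
  have key : ∀ j : Fin d, Phi d f j j x =
      ((((d:ℝ)-1)/d) * (deriv f ‖x‖)^2 / ‖x‖^2 - 2 * (f ‖x‖)^2 / ‖x‖^4) * x j ^ 2
      + 2 * (f ‖x‖)^2 / ‖x‖^2 := by
    intro j
    simp only [Phi, eq_self_iff_true, if_true]
    field_simp
    ring
  rw [Finset.sum_congr rfl (fun j _ => key j)]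
  simp only [Finset.sum_add_distrib, ← Finset.mul_sum, Finset.sum_const, Finset.card_univ,
    Fintype.card_fin, nsmul_eq_mul]
  rw [hx2]
  simp only [Wf]
  field_simp
  ring

end Stmt19Aux

open Stmt19Aux in
/-- For `T = f(|x|)H̄(x)` with `f(0) = f'(0) = 0`, the field
`∇·(∇T ⊗ ∇T) - ∇((1/2)|∇T|²)` is the radial field
`((d-1)/d) f'(r)(f''(r) + (d-1)f'(r)/r - 2d f(r)/r²) x/|x|`, hence there is `h` with the
indicated derivative such that `∇·(∇T ⊗ ∇T) = ∇((1/2)|∇T|² + h(|x|))`. -/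
theorem stmt_19 (d : ℕ) (hd : d = 2 ∨ d = 3) (f : ℝ → ℝ)
    (hf : ContDiff ℝ (⊤ : ℕ∞) f) (hf0 : f 0 = 0) (hf0' : deriv f 0 = 0) :
    ∃ h : ℝ → ℝ,
      (∀ r : ℝ, 0 < r → HasDerivAt h
        ((((d : ℝ) - 1) / d) * deriv f r *
          (deriv (deriv f) r + ((d : ℝ) - 1) * deriv f r / r
            - 2 * (d : ℝ) * f r / r ^ 2)) r) ∧
      (∀ x : EuclideanSpace ℝ (Fin d), x ≠ 0 → ∀ i : Fin d,
        (∑ j, pd d (fun y => ∑ k, ∑ l, pd d (Tc d f k l) y i * pd d (Tc d f k l) y j) x j)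
          - pd d (fun y => (1/2) * ∑ j, ∑ k, ∑ l, (pd d (Tc d f k l) y j) ^ 2) x i
        = (((d : ℝ) - 1) / d) * deriv f ‖x‖ *
            (deriv (deriv f) ‖x‖ + ((d : ℝ) - 1) * deriv f ‖x‖ / ‖x‖
              - 2 * (d : ℝ) * f ‖x‖ / ‖x‖ ^ 2) * (x i / ‖x‖)) ∧
      (∀ x : EuclideanSpace ℝ (Fin d), x ≠ 0 → ∀ i : Fin d,
        (∑ j, pd d (fun y => ∑ k, ∑ l, pd d (Tc d f k l) y i * pd d (Tc d f k l) y j) x j)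
        = pd d (fun y =>
            (1/2) * (∑ j, ∑ k, ∑ l, (pd d (Tc d f k l) y j) ^ 2) + h ‖y‖) x i) := by
  have hd0 : (d:ℝ) ≠ 0 := by rcases hd with h|h <;> subst h <;> norm_num
  set g : ℝ → ℝ := fun t => (((d : ℝ) - 1) / d) * deriv f t *
      (deriv (deriv f) t + ((d : ℝ) - 1) * deriv f t / t
        - 2 * (d : ℝ) * f t / t ^ 2) with hg
  have hf1 : Continuous (deriv f) :=
    (contDiff_infty_iff_deriv.mp (hf.of_le (by simp))).2.continuous
  have hf2 : Continuous (deriv (deriv f)) :=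
    (contDiff_infty_iff_deriv.mp
      (contDiff_infty_iff_deriv.mp (hf.of_le (by simp))).2).2.continuous
  have hgc : ContinuousOn g (Set.Ioi (0:ℝ)) := by
    rw [hg]
    refine (continuousOn_const.mul hf1.continuousOn).mul
      ((hf2.continuousOn.add ((continuousOn_const.mul hf1.continuousOn).div
        continuousOn_id (fun t ht => ne_of_gt ht))).sub
        ((continuousOn_const.mul hf.continuous.continuousOn).div
          ((continuous_pow 2).continuousOn) (fun t ht => pow_ne_zero 2 (ne_of_gt ht))))
  set h : ℝ → ℝ := fun t => ∫ s in (1:ℝ)..t, g s with hh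
  have hder : ∀ r : ℝ, 0 < r → HasDerivAt h (g r) r := by
    intro r hr
    have hsub : Set.uIcc (1:ℝ) r ⊆ Set.Ioi 0 := by
      intro t ht
      rcases Set.mem_uIcc.mp ht with ⟨h1, _⟩ | ⟨h1, _⟩
      · exact lt_of_lt_of_le one_pos h1
      · exact lt_of_lt_of_le hr h1
    exact intervalIntegral.integral_hasDerivAt_right
      ((hgc.mono hsub).intervalIntegrable)
      (hgc.stronglyMeasurableAtFilter isOpen_Ioi r hr)
      ((hgc r hr).continuousAt (Ioi_mem_nhds hr))
  refine ⟨h, fun r hr => hder r hr, ?_, ?_⟩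
  · intro x hx i
    have hev : ∀ᶠ y in nhds x, y ≠ (0 : EuclideanSpace ℝ (Fin d)) := eventually_ne_nhds hx
    have hnz : ‖x‖ ≠ 0 := norm_ne_zero_iff.mpr hx
    have e1 : ∀ j : Fin d,
        pd d (fun y => ∑ k, ∑ l, pd d (Tc d f k l) y i * pd d (Tc d f k l) y j) x j
          = pd d (Phi d f i j) x j := fun j =>
      pd_congr (hev.mono fun y hy => sum_pd_eq_Phi hd0 hf hy i j) j
    rw [Finset.sum_congr rfl (fun j _ => e1 j), div_Phi hd0 hf hx i]
    have e2 : pd d (fun y => (1/2) * ∑ j, ∑ k, ∑ l, (pd d (Tc d f k l) y j) ^ 2) x i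
        = pd d (Wf d f) x i :=
      pd_congr (hev.mono fun y hy => trace_eq hd0 hf hy) i
    rw [e2, pd_Wf hd0 hf hx i]
    field_simp
    ring
  · intro x hx i
    have hev : ∀ᶠ y in nhds x, y ≠ (0 : EuclideanSpace ℝ (Fin d)) := eventually_ne_nhds hx
    have hnz : ‖x‖ ≠ 0 := norm_ne_zero_iff.mpr hx
    have hnp : (0:ℝ) < ‖x‖ := norm_pos_iff.mpr hx
    have e1 : ∀ j : Fin d,
        pd d (fun y => ∑ k, ∑ l, pd d (Tc d f k l) y i * pd d (Tc d f k l) y j) x j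
          = pd d (Phi d f i j) x j := fun j =>
      pd_congr (hev.mono fun y hy => sum_pd_eq_Phi hd0 hf hy i j) j
    rw [Finset.sum_congr rfl (fun j _ => e1 j), div_Phi hd0 hf hx i]
    have ec : (fun y => (1/2) * (∑ j, ∑ k, ∑ l, (pd d (Tc d f k l) y j) ^ 2) + h ‖y‖)
        =ᶠ[nhds x] (fun y => Wf d f y + h ‖y‖) :=
      hev.mono fun y hy => by simp only [trace_eq hd0 hf hy]
    rw [pd_congr ec i, pd_Wf_add hd0 hf hx (hder ‖x‖ hnp) i]
    simp only [hg]
    field_simp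
    ring

end
end
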